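/- The orthogonal complement {v ∈ Pic : v·Di = 0 for all i = 0,…,12} of the span of D0,…,D12 with respect to the intersection form is exactly the ℤ-submodule ℤα1 + ℤα2 + ℤα3. -/

import Mathlib

/-- The Picard lattice of the space of initial values of the HV equation:
the free ℤ-module of rank 16 with basis `H0, H1, E1, …, E14`. -/
abbrev Pic : Type := Fin 16 → ℤ

/-- The class `H0` (total transform of a line `x = const`). -/
def H0 : Pic := Pi.single 0 1

/-- The class `H1` (total transform of a line `y = const`). -/
def H1 : Pic := Pi.single 1 1

/-- The exceptional classes: `E k` is the paper's `E_{k+1}` for `k : Fin 14`. -/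
def E (k : Fin 14) : Pic := Pi.single k.succ.succ 1

/-- The intersection form: `H0·H1 = 1`, `H0·H0 = H1·H1 = 0`, `Ek·El = -δ`, `Hi·Ek = 0`. -/
def ip (u v : Pic) : ℤ :=
  u 0 * v 1 + u 1 * v 0 - ∑ k : Fin 14, u k.succ.succ * v k.succ.succ

/-- The canonical class `K = -2H0 - 2H1 + E1 + ⋯ + E14`. -/
def KX : Pic := (-2 : ℤ) • H0 + (-2 : ℤ) • H1 + ∑ k : Fin 14, E k

/-- The classes `D0, …, D12` of the irreducible components of `-K`. -/
def D : Fin 13 → Pic :=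
  ![E 0 - E 1, E 1 - E 2, E 2 - E 3,
    E 4 - E 5, E 5 - E 6, E 6 - E 7,
    E 8 - E 9, E 10 - E 11, E 11 - E 12, E 12 - E 13,
    H0 - E 0 - E 1 - E 8, H1 - E 4 - E 5 - E 8, E 9 - E 10 - E 11]

/-- The root basis `α1, α2, α3` of the orthogonal complement of the `D`'s. -/
def α : Fin 3 → Pic :=
  ![(2 : ℤ) • H1 - E 0 - E 1 - E 2 - E 3,
    (2 : ℤ) • H0 - E 4 - E 5 - E 6 - E 7,
    (2 : ℤ) • H0 + (2 : ℤ) • H1 - (2 : ℤ) • E 8 - (2 : ℤ) • E 9 - E 10 - E 11 - E 12 - E 13]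

/-- The ℤ-linear map sending the `j`-th basis vector to `f j`. -/
def ofImages (f : Fin 16 → Pic) : Pic →ₗ[ℤ] Pic :=
  Matrix.toLin' (Matrix.of fun i j => f j i)

/-- The generator `w1`. -/
def w1 : Pic →ₗ[ℤ] Pic := ofImages
  ![H0 + (2 : ℤ) • H1 - E 0 - E 1 - E 2 - E 3, H1,
    H1 - E 3, H1 - E 2, H1 - E 1, H1 - E 0,
    E 4, E 5, E 6, E 7, E 8, E 9, E 10, E 11, E 12, E 13]

/-- The generator `w2`. -/
def w2 : Pic →ₗ[ℤ] Pic := ofImages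
  ![H0, (2 : ℤ) • H0 + H1 - E 4 - E 5 - E 6 - E 7,
    E 0, E 1, E 2, E 3,
    H0 - E 7, H0 - E 6, H0 - E 5, H0 - E 4,
    E 8, E 9, E 10, E 11, E 12, E 13]

/-- The generator `w3`. -/
def w3 : Pic →ₗ[ℤ] Pic := ofImages
  ![H0 + α 2, H1 + α 2,
    E 0, E 1, E 2, E 3, E 4, E 5, E 6, E 7,
    E 8 + α 2, E 9 + α 2,
    E 10 + (H0 + H1 - E 8 - E 9 - E 10 - E 13),
    E 11 + (H0 + H1 - E 8 - E 9 - E 11 - E 12),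
    E 12 + (H0 + H1 - E 8 - E 9 - E 11 - E 12),
    E 13 + (H0 + H1 - E 8 - E 9 - E 10 - E 13)]

/-- The generator `σ12`. -/
def s12 : Pic →ₗ[ℤ] Pic := ofImages
  ![H1, H0, E 4, E 5, E 6, E 7, E 0, E 1, E 2, E 3,
    E 8, E 9, E 10, E 11, E 12, E 13]

/-- The generator `σ13`. -/
def s13 : Pic →ₗ[ℤ] Pic := ofImages
  ![H0, H0 + H1 - E 8 - E 9,
    E 10, E 11, E 12, E 13,
    E 4, E 5, E 6, E 7,
    H0 - E 9, H0 - E 8,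
    E 0, E 1, E 2, E 3]

/-- The action `φ` of the Hietarinta–Viallet equation on the Picard lattice. -/
def phiHV : Pic →ₗ[ℤ] Pic := ofImages
  ![(3 : ℤ) • H0 + H1 - E 4 - E 5 - E 6 - E 7 - E 8 - E 9, H0,
    H0 - E 7, H0 - E 6, H0 - E 5, H0 - E 4,
    E 10, E 11, E 12, E 13,
    H0 - E 9, H0 - E 8,
    E 0, E 1, E 2, E 3]

/-- The orthogonal complement of the span of `D0, …, D12` with respect to the
intersection form is exactly `ℤα1 + ℤα2 + ℤα3`. -/
lemma ipD0 (v : Pic) : ip v (D 0) = (-1) * v 2 + v 3 := by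
  show v 0 * (0) + v 1 * (0) - (v 2 * (1) + (v 3 * (-1) + (v 4 * (0) + (v 5 * (0) + (v 6 * (0) + (v 7 * (0) + (v 8 * (0) + (v 9 * (0) + (v 10 * (0) + (v 11 * (0) + (v 12 * (0) + (v 13 * (0) + (v 14 * (0) + (v 15 * (0) + (0))))))))))))))) = _
  ring

lemma ipD1 (v : Pic) : ip v (D 1) = (-1) * v 3 + v 4 := by
  show v 0 * (0) + v 1 * (0) - (v 2 * (0) + (v 3 * (1) + (v 4 * (-1) + (v 5 * (0) + (v 6 * (0) + (v 7 * (0) + (v 8 * (0) + (v 9 * (0) + (v 10 * (0) + (v 11 * (0) + (v 12 * (0) + (v 13 * (0) + (v 14 * (0) + (v 15 * (0) + (0))))))))))))))) = _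
  ring

lemma ipD2 (v : Pic) : ip v (D 2) = (-1) * v 4 + v 5 := by
  show v 0 * (0) + v 1 * (0) - (v 2 * (0) + (v 3 * (0) + (v 4 * (1) + (v 5 * (-1) + (v 6 * (0) + (v 7 * (0) + (v 8 * (0) + (v 9 * (0) + (v 10 * (0) + (v 11 * (0) + (v 12 * (0) + (v 13 * (0) + (v 14 * (0) + (v 15 * (0) + (0))))))))))))))) = _
  ring

lemma ipD3 (v : Pic) : ip v (D 3) = (-1) * v 6 + v 7 := by
  show v 0 * (0) + v 1 * (0) - (v 2 * (0) + (v 3 * (0) + (v 4 * (0) + (v 5 * (0) + (v 6 * (1) + (v 7 * (-1) + (v 8 * (0) + (v 9 * (0) + (v 10 * (0) + (v 11 * (0) + (v 12 * (0) + (v 13 * (0) + (v 14 * (0) + (v 15 * (0) + (0))))))))))))))) = _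
  ring

lemma ipD4 (v : Pic) : ip v (D 4) = (-1) * v 7 + v 8 := by
  show v 0 * (0) + v 1 * (0) - (v 2 * (0) + (v 3 * (0) + (v 4 * (0) + (v 5 * (0) + (v 6 * (0) + (v 7 * (1) + (v 8 * (-1) + (v 9 * (0) + (v 10 * (0) + (v 11 * (0) + (v 12 * (0) + (v 13 * (0) + (v 14 * (0) + (v 15 * (0) + (0))))))))))))))) = _
  ring

lemma ipD5 (v : Pic) : ip v (D 5) = (-1) * v 8 + v 9 := by
  show v 0 * (0) + v 1 * (0) - (v 2 * (0) + (v 3 * (0) + (v 4 * (0) + (v 5 * (0) + (v 6 * (0) + (v 7 * (0) + (v 8 * (1) + (v 9 * (-1) + (v 10 * (0) + (v 11 * (0) + (v 12 * (0) + (v 13 * (0) + (v 14 * (0) + (v 15 * (0) + (0))))))))))))))) = _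
  ring

lemma ipD6 (v : Pic) : ip v (D 6) = (-1) * v 10 + v 11 := by
  show v 0 * (0) + v 1 * (0) - (v 2 * (0) + (v 3 * (0) + (v 4 * (0) + (v 5 * (0) + (v 6 * (0) + (v 7 * (0) + (v 8 * (0) + (v 9 * (0) + (v 10 * (1) + (v 11 * (-1) + (v 12 * (0) + (v 13 * (0) + (v 14 * (0) + (v 15 * (0) + (0))))))))))))))) = _
  ring

lemma ipD7 (v : Pic) : ip v (D 7) = (-1) * v 12 + v 13 := by
  show v 0 * (0) + v 1 * (0) - (v 2 * (0) + (v 3 * (0) + (v 4 * (0) + (v 5 * (0) + (v 6 * (0) + (v 7 * (0) + (v 8 * (0) + (v 9 * (0) + (v 10 * (0) + (v 11 * (0) + (v 12 * (1) + (v 13 * (-1) + (v 14 * (0) + (v 15 * (0) + (0))))))))))))))) = _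
  ring

lemma ipD8 (v : Pic) : ip v (D 8) = (-1) * v 13 + v 14 := by
  show v 0 * (0) + v 1 * (0) - (v 2 * (0) + (v 3 * (0) + (v 4 * (0) + (v 5 * (0) + (v 6 * (0) + (v 7 * (0) + (v 8 * (0) + (v 9 * (0) + (v 10 * (0) + (v 11 * (0) + (v 12 * (0) + (v 13 * (1) + (v 14 * (-1) + (v 15 * (0) + (0))))))))))))))) = _
  ring

lemma ipD9 (v : Pic) : ip v (D 9) = (-1) * v 14 + v 15 := by
  show v 0 * (0) + v 1 * (0) - (v 2 * (0) + (v 3 * (0) + (v 4 * (0) + (v 5 * (0) + (v 6 * (0) + (v 7 * (0) + (v 8 * (0) + (v 9 * (0) + (v 10 * (0) + (v 11 * (0) + (v 12 * (0) + (v 13 * (0) + (v 14 * (1) + (v 15 * (-1) + (0))))))))))))))) = _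
  ring

lemma ipD10 (v : Pic) : ip v (D 10) = v 1 + v 2 + v 3 + v 10 := by
  show v 0 * (0) + v 1 * (1) - (v 2 * (-1) + (v 3 * (-1) + (v 4 * (0) + (v 5 * (0) + (v 6 * (0) + (v 7 * (0) + (v 8 * (0) + (v 9 * (0) + (v 10 * (-1) + (v 11 * (0) + (v 12 * (0) + (v 13 * (0) + (v 14 * (0) + (v 15 * (0) + (0))))))))))))))) = _
  ring

lemma ipD11 (v : Pic) : ip v (D 11) = v 0 + v 6 + v 7 + v 10 := by
  show v 0 * (1) + v 1 * (0) - (v 2 * (0) + (v 3 * (0) + (v 4 * (0) + (v 5 * (0) + (v 6 * (-1) + (v 7 * (-1) + (v 8 * (0) + (v 9 * (0) + (v 10 * (-1) + (v 11 * (0) + (v 12 * (0) + (v 13 * (0) + (v 14 * (0) + (v 15 * (0) + (0))))))))))))))) = _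
  ring

lemma ipD12 (v : Pic) : ip v (D 12) = (-1) * v 11 + v 12 + v 13 := by
  show v 0 * (0) + v 1 * (0) - (v 2 * (0) + (v 3 * (0) + (v 4 * (0) + (v 5 * (0) + (v 6 * (0) + (v 7 * (0) + (v 8 * (0) + (v 9 * (0) + (v 10 * (0) + (v 11 * (1) + (v 12 * (-1) + (v 13 * (-1) + (v 14 * (0) + (v 15 * (0) + (0))))))))))))))) = _
  ring

lemma a0 : α 0 = ![0,2,-1,-1,-1,-1,0,0,0,0,0,0,0,0,0,0] := by decide
lemma a1 : α 1 = ![2,0,0,0,0,0,-1,-1,-1,-1,0,0,0,0,0,0] := by decide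
lemma a2 : α 2 = ![2,2,0,0,0,0,0,0,0,0,-2,-2,-1,-1,-1,-1] := by decide

def combo (p q r : ℤ) : Pic :=
  ![2*q+2*r, 2*p+2*r, -p,-p,-p,-p, -q,-q,-q,-q, -2*r,-2*r, -r,-r,-r,-r]

lemma combo_eq (p q r : ℤ) : p • α 0 + q • α 1 + r • α 2 = combo p q r := by
  rw [a0, a1, a2]
  simp only [combo, Matrix.smul_cons, Matrix.smul_empty, Matrix.cons_add_cons,
    Matrix.empty_add_empty, smul_eq_mul]
  simp only [Matrix.vecCons, Fin.cons_inj, and_true]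
  norm_num
  exact ⟨by ring, by ring, by ring⟩

lemma veq (v : Pic) : v = ![v 0, v 1, v 2, v 3, v 4, v 5, v 6, v 7,
    v 8, v 9, v 10, v 11, v 12, v 13, v 14, v 15] := by
  funext i
  fin_cases i <;> rfl

lemma back0 (p q r : ℤ) : ip (combo p q r) (D 0) = 0 := by
  rw [ipD0]
  show (-1) * (-p) + (-p) = 0
  ring

lemma back1 (p q r : ℤ) : ip (combo p q r) (D 1) = 0 := by
  rw [ipD1]
  show (-1) * (-p) + (-p) = 0
  ring

lemma back2 (p q r : ℤ) : ip (combo p q r) (D 2) = 0 := by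
  rw [ipD2]
  show (-1) * (-p) + (-p) = 0
  ring

lemma back3 (p q r : ℤ) : ip (combo p q r) (D 3) = 0 := by
  rw [ipD3]
  show (-1) * (-q) + (-q) = 0
  ring

lemma back4 (p q r : ℤ) : ip (combo p q r) (D 4) = 0 := by
  rw [ipD4]
  show (-1) * (-q) + (-q) = 0
  ring

lemma back5 (p q r : ℤ) : ip (combo p q r) (D 5) = 0 := by
  rw [ipD5]
  show (-1) * (-q) + (-q) = 0
  ring

lemma back6 (p q r : ℤ) : ip (combo p q r) (D 6) = 0 := by
  rw [ipD6]
  show (-1) * (-2*r) + (-2*r) = 0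
  ring

lemma back7 (p q r : ℤ) : ip (combo p q r) (D 7) = 0 := by
  rw [ipD7]
  show (-1) * (-r) + (-r) = 0
  ring

lemma back8 (p q r : ℤ) : ip (combo p q r) (D 8) = 0 := by
  rw [ipD8]
  show (-1) * (-r) + (-r) = 0
  ring

lemma back9 (p q r : ℤ) : ip (combo p q r) (D 9) = 0 := by
  rw [ipD9]
  show (-1) * (-r) + (-r) = 0
  ring

lemma back10 (p q r : ℤ) : ip (combo p q r) (D 10) = 0 := by
  rw [ipD10]
  show (2*p+2*r) + (-p) + (-p) + (-2*r) = 0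
  ring

lemma back11 (p q r : ℤ) : ip (combo p q r) (D 11) = 0 := by
  rw [ipD11]
  show (2*q+2*r) + (-q) + (-q) + (-2*r) = 0
  ring

lemma back12 (p q r : ℤ) : ip (combo p q r) (D 12) = 0 := by
  rw [ipD12]
  show (-1) * (-2*r) + (-r) + (-r) = 0
  ring

theorem orthogonal_complement_eq_span_alpha :
    ∀ v : Pic, (∀ i : Fin 13, ip v (D i) = 0) ↔
      v ∈ Submodule.span ℤ ({α 0, α 1, α 2} : Set Pic) := by
  intro v
  constructor
  · intro h
    have h0 := h 0; rw [ipD0] at h0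
    have h1 := h 1; rw [ipD1] at h1
    have h2 := h 2; rw [ipD2] at h2
    have h3 := h 3; rw [ipD3] at h3
    have h4 := h 4; rw [ipD4] at h4
    have h5 := h 5; rw [ipD5] at h5
    have h6 := h 6; rw [ipD6] at h6
    have h7 := h 7; rw [ipD7] at h7
    have h8 := h 8; rw [ipD8] at h8
    have h9 := h 9; rw [ipD9] at h9
    have h10 := h 10; rw [ipD10] at h10
    have h11 := h 11; rw [ipD11] at h11
    have h12 := h 12; rw [ipD12] at h12
    have hv : v = combo (-(v 2)) (-(v 6)) (-(v 12)) := by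
      conv_lhs => rw [veq v]
      simp only [combo, Matrix.vecCons, Fin.cons_inj, and_true]
      omega
    rw [hv, ← combo_eq]
    exact Submodule.add_mem _ (Submodule.add_mem _
      (Submodule.smul_mem _ _ (Submodule.subset_span (by simp)))
      (Submodule.smul_mem _ _ (Submodule.subset_span (by simp))))
      (Submodule.smul_mem _ _ (Submodule.subset_span (by simp)))
  · intro hv
    rw [show ({α 0, α 1, α 2} : Set Pic) = insert (α 0) (insert (α 1) {α 2}) from rfl,
      Submodule.mem_span_insert] at hv
    obtain ⟨p, w, hw, rfl⟩ := hv
    rw [Submodule.mem_span_insert] at hw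
    obtain ⟨q, u, hu, rfl⟩ := hw
    rw [Submodule.mem_span_singleton] at hu
    obtain ⟨r, rfl⟩ := hu
    rw [← add_assoc, combo_eq]
    intro i
    fin_cases i
    · exact back0 p q r
    · exact back1 p q r
    · exact back2 p q r
    · exact back3 p q r
    · exact back4 p q r
    · exact back5 p q r
    · exact back6 p q r
    · exact back7 p q r
    · exact back8 p q r
    · exact back9 p q r
    · exact back10 p q r
    · exact back11 p q r
    · exact back12 p q r
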